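/- Let (G₁,δ₁), (G₂,δ₂), and (G₃,δ₃) be three metric monoids. Let ε₁, ε₂ ∈ (0, √2/2]. If (ς₁, κ₁) is a (1/ε₁)-local ε₁-almost isometric isomorphism from (G₁,δ₁) to (G₂,δ₂) and (ς₂, κ₂) is a (1/ε₂)-local ε₂-almost isometric isomorphism from (G₂,δ₂) to (G₃,δ₃), then (ς₂ ∘ ς₁, κ₁ ∘ κ₂) is a (1/(ε₁+ε₂))-local (ε₁+ε₂)-almost isometric isomorphism from (G₁,δ₁) to (G₃,δ₃). -/

import Mathlib

/-! Composing the two almost isometries through the middle monoid, the triangle inequality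
adds the errors. The only point is to stay inside the balls where the hypotheses apply:
an almost isometry moves the distance to `1` by at most its error, and `ε₁, ε₂ ≤ √2/2` gives
`1/(ε₁+ε₂) + ε₁ ≤ 1/ε₂` (equivalently `ε₂ (ε₁+ε₂) ≤ 1`), and symmetrically. -/

/-- `(ς, κ)` is an `r`-local `ε`-almost isometric isomorphism between the metric
monoids `G` and `H`. -/
def IsLocAlmostIsoIso {G H : Type*} [Monoid G] [MetricSpace G] [Monoid H] [MetricSpace H]
    (ς : G → H) (κ : H → G) (ε r : ℝ) : Prop :=
  ς 1 = 1 ∧ κ 1 = 1 ∧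
    (∀ g ∈ Metric.closedBall (1 : G) r, ∀ g' ∈ Metric.closedBall (1 : G) r,
      ∀ h ∈ Metric.closedBall (1 : H) r,
        |dist (ς g * ς g') h - dist (g * g') (κ h)| ≤ ε) ∧
    (∀ g ∈ Metric.closedBall (1 : H) r, ∀ g' ∈ Metric.closedBall (1 : H) r,
      ∀ h ∈ Metric.closedBall (1 : G) r,
        |dist (κ g * κ g') h - dist (g * g') (ς h)| ≤ ε)

open Metric Set

namespace IsLocAlmostIsoIso

variable {G H K : Type*} [Monoid G] [MetricSpace G] [Monoid H] [MetricSpace H]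
  [Monoid K] [MetricSpace K]

theorem symm {ς : G → H} {κ : H → G} {ε r : ℝ} (h : IsLocAlmostIsoIso ς κ ε r) :
    IsLocAlmostIsoIso κ ς ε r :=
  ⟨h.2.1, h.1, h.2.2.2, h.2.2.1⟩

theorem dist_one_le {ς : G → H} {κ : H → G} {ε r : ℝ} (h : IsLocAlmostIsoIso ς κ ε r)
    {g : G} (hg : g ∈ closedBall 1 r) : dist (ς g) 1 ≤ dist g 1 + ε := by
  obtain ⟨hς, hκ, hforward, -⟩ := h
  have hr : 0 ≤ r := dist_nonneg.trans (mem_closedBall.1 hg)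
  have h₁ : (1 : G) ∈ closedBall 1 r := mem_closedBall_self hr
  have h₁' : (1 : H) ∈ closedBall 1 r := mem_closedBall_self hr
  have := hforward g hg 1 h₁ 1 h₁'
  rw [hς, hκ, mul_one, mul_one] at this
  linarith [(abs_le.1 this).2]

theorem mapsTo_closedBall {ς : G → H} {κ : H → G} {ε r s t : ℝ}
    (h : IsLocAlmostIsoIso ς κ ε r) (hsr : s ≤ r) (hst : s + ε ≤ t) :
    MapsTo ς (closedBall 1 s) (closedBall 1 t) := fun g hg =>
  mem_closedBall.2 <| calc
    dist (ς g) 1 ≤ dist g 1 + ε := h.dist_one_le (closedBall_subset_closedBall hsr hg)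
    _ ≤ t := by linarith [mem_closedBall.1 hg]

theorem abs_dist_comp_sub_dist_le {ς₁ : G → H} {κ₁ : H → G} {ς₂ : H → K} {κ₂ : K → H}
    {ε₁ ε₂ r₁ r₂ r : ℝ} (h₁ : IsLocAlmostIsoIso ς₁ κ₁ ε₁ r₁)
    (h₂ : IsLocAlmostIsoIso ς₂ κ₂ ε₂ r₂) (hr₁ : r ≤ r₁) (hr₂ : r ≤ r₂)
    (hr₁₂ : r + ε₁ ≤ r₂) (hr₂₁ : r + ε₂ ≤ r₁)
    {g g' : G} (hg : g ∈ closedBall 1 r) (hg' : g' ∈ closedBall 1 r)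
    {k : K} (hk : k ∈ closedBall 1 r) :
    |dist (ς₂ (ς₁ g) * ς₂ (ς₁ g')) k - dist (g * g') (κ₁ (κ₂ k))| ≤ ε₁ + ε₂ := by
  have hς₁ := h₁.mapsTo_closedBall hr₁ hr₁₂
  have hκ₂ := h₂.symm.mapsTo_closedBall hr₂ hr₂₁
  have step₂ := h₂.2.2.1 _ (hς₁ hg) _ (hς₁ hg') k (closedBall_subset_closedBall hr₂ hk)
  have step₁ := h₁.2.2.1 g (closedBall_subset_closedBall hr₁ hg)
    g' (closedBall_subset_closedBall hr₁ hg') _ (hκ₂ hk)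
  calc _ ≤ |dist (ς₂ (ς₁ g) * ς₂ (ς₁ g')) k - dist (ς₁ g * ς₁ g') (κ₂ k)|
        + |dist (ς₁ g * ς₁ g') (κ₂ k) - dist (g * g') (κ₁ (κ₂ k))| := abs_sub_le _ _ _
    _ ≤ ε₁ + ε₂ := by linarith

theorem comp {ς₁ : G → H} {κ₁ : H → G} {ς₂ : H → K} {κ₂ : K → H}
    {ε₁ ε₂ r₁ r₂ r : ℝ} (h₁ : IsLocAlmostIsoIso ς₁ κ₁ ε₁ r₁)
    (h₂ : IsLocAlmostIsoIso ς₂ κ₂ ε₂ r₂) (hr₁ : r ≤ r₁) (hr₂ : r ≤ r₂)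
    (hr₁₂ : r + ε₁ ≤ r₂) (hr₂₁ : r + ε₂ ≤ r₁) :
    IsLocAlmostIsoIso (ς₂ ∘ ς₁) (κ₁ ∘ κ₂) (ε₁ + ε₂) r := by
  refine ⟨by simp [h₁.1, h₂.1], by simp [h₁.2.1, h₂.2.1], ?_, ?_⟩
  · exact fun g hg g' hg' k hk =>
      abs_dist_comp_sub_dist_le h₁ h₂ hr₁ hr₂ hr₁₂ hr₂₁ hg hg' hk
  · intro g hg g' hg' k hk
    rw [add_comm ε₁]
    exact abs_dist_comp_sub_dist_le h₂.symm h₁.symm hr₂ hr₁ hr₂₁ hr₁₂ hg hg' hk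

end IsLocAlmostIsoIso

theorem one_div_add_add_le_one_div {a b : ℝ} (ha : 0 < a) (hb : 0 < b)
    (hab : b * (a + b) ≤ 1) : 1 / (a + b) + a ≤ 1 / b := by
  rw [div_add' _ _ _ (by positivity), div_le_div_iff₀ (by positivity) hb]
  nlinarith

theorem mul_add_le_one_of_le_sqrt_two_div_two {a b : ℝ} (ha : 0 < a) (hb : 0 < b)
    (ha' : a ≤ Real.sqrt 2 / 2) (hb' : b ≤ Real.sqrt 2 / 2) : b * (a + b) ≤ 1 := by
  have hsq : Real.sqrt 2 ^ 2 = 2 := Real.sq_sqrt zero_le_two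
  nlinarith

theorem uiso_composition_general
    (G₁ G₂ G₃ : Type*) [Monoid G₁] [MetricSpace G₁] [Monoid G₂] [MetricSpace G₂]
    [Monoid G₃] [MetricSpace G₃]
    (ε₁ ε₂ : ℝ) (hε₁ : 0 < ε₁) (hε₁' : ε₁ ≤ Real.sqrt 2 / 2)
    (hε₂ : 0 < ε₂) (hε₂' : ε₂ ≤ Real.sqrt 2 / 2)
    (ς₁ : G₁ → G₂) (κ₁ : G₂ → G₁) (ς₂ : G₂ → G₃) (κ₂ : G₃ → G₂)
    (h₁ : IsLocAlmostIsoIso ς₁ κ₁ ε₁ (1 / ε₁))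
    (h₂ : IsLocAlmostIsoIso ς₂ κ₂ ε₂ (1 / ε₂)) :
    IsLocAlmostIsoIso (ς₂ ∘ ς₁) (κ₁ ∘ κ₂) (ε₁ + ε₂) (1 / (ε₁ + ε₂)) := by
  have hr₁ : 1 / (ε₁ + ε₂) ≤ 1 / ε₁ := one_div_le_one_div_of_le hε₁ (by linarith)
  have hr₂ : 1 / (ε₁ + ε₂) ≤ 1 / ε₂ := one_div_le_one_div_of_le hε₂ (by linarith)
  have hr₁₂ : 1 / (ε₁ + ε₂) + ε₁ ≤ 1 / ε₂ := one_div_add_add_le_one_div hε₁ hε₂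
    (mul_add_le_one_of_le_sqrt_two_div_two hε₁ hε₂ hε₁' hε₂')
  have hr₂₁ : 1 / (ε₁ + ε₂) + ε₂ ≤ 1 / ε₁ := by
    rw [add_comm ε₁]
    exact one_div_add_add_le_one_div hε₂ hε₁
      (mul_add_le_one_of_le_sqrt_two_div_two hε₂ hε₁ hε₂' hε₁')
  exact h₁.comp h₂ hr₁ hr₂ hr₁₂ hr₂₁

/-- Composition of local almost isometric isomorphisms: a
`(1/ε₁)`-local `ε₁`-almost isometric isomorphism followed by a `(1/ε₂)`-local
`ε₂`-almost isometric isomorphism yields a `(1/(ε₁+ε₂))`-local `(ε₁+ε₂)`-almost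
isometric isomorphism, for `ε₁, ε₂ ∈ (0, √2/2]`. -/
theorem uiso_composition
    (G₁ G₂ G₃ : Type*) [Monoid G₁] [MetricSpace G₁] [Monoid G₂] [MetricSpace G₂]
    [Monoid G₃] [MetricSpace G₃]
    (h_left₁ : ∀ g h k : G₁, dist (g * h) (g * k) = dist h k)
    (h_cont₁ : Continuous fun p : G₁ × G₁ => p.1 * p.2)
    (h_left₂ : ∀ g h k : G₂, dist (g * h) (g * k) = dist h k)
    (h_cont₂ : Continuous fun p : G₂ × G₂ => p.1 * p.2)
    (h_left₃ : ∀ g h k : G₃, dist (g * h) (g * k) = dist h k)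
    (h_cont₃ : Continuous fun p : G₃ × G₃ => p.1 * p.2)
    (ε₁ ε₂ : ℝ) (hε₁ : 0 < ε₁) (hε₁' : ε₁ ≤ Real.sqrt 2 / 2)
    (hε₂ : 0 < ε₂) (hε₂' : ε₂ ≤ Real.sqrt 2 / 2)
    (ς₁ : G₁ → G₂) (κ₁ : G₂ → G₁) (ς₂ : G₂ → G₃) (κ₂ : G₃ → G₂)
    (h₁ : IsLocAlmostIsoIso ς₁ κ₁ ε₁ (1 / ε₁))
    (h₂ : IsLocAlmostIsoIso ς₂ κ₂ ε₂ (1 / ε₂)) :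
    IsLocAlmostIsoIso (ς₂ ∘ ς₁) (κ₁ ∘ κ₂) (ε₁ + ε₂) (1 / (ε₁ + ε₂)) :=
  uiso_composition_general G₁ G₂ G₃ ε₁ ε₂ hε₁ hε₁' hε₂ hε₂' ς₁ κ₁ ς₂ κ₂ h₁ h₂
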